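/- arXiv:1806.03233 — 2 statements merged into one kernel-verified Lean document; each statement's English description precedes it below -/
import Mathlib

section
/- With the same notation, let g_0^f(h,k) = Hom(V_+ ∩ (F^t)^h V_−, V_− ∩ F^k V_+) ⊂ End(V) for 0 ≤ h,k ≤ p_1−1. If ℓ > min(h,k), then φ_ℓ vanishes on g_0^f(h,k), and if ℓ ≤ min(h,k), then the restriction of φ_ℓ to g_0^f(h,k) is injective. -/
/-! In the Jordan basis, `F` moves each box one step to the left in its row and `Fᵗ` one step
to the right, while `1₊ = 1_{V₊ ∩ (Fᵗ)^h V₋}` and `1₋ = 1_{V₋ ∩ F^k V₊}` keep the rightmost,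
resp. leftmost, boxes of the rows of length `h + 1`, resp. `k + 1`. If `ℓ > h` then
`1₊ Fᵗ^ℓ = 0`, and if `ℓ > k` then `Fᵗ^ℓ 1₋ = 0`, because those rows are too short for a shift
by `ℓ`; either factor occurs in every term of `φ_ℓ(A) = φ_ℓ(1₋ A 1₊)`. If `ℓ ≤ min h k`, then
`Fᵗ^ℓ F^{ℓ-i} 1₊` is `1₊` for `i = 0` and `0` otherwise, and `F^ℓ Fᵗ^ℓ 1₋ = 1₋`, so
`F^ℓ φ_ℓ(A) 1₊ = F^ℓ Fᵗ^ℓ A 1₊ = A`. -/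

/-- A "box" of the pyramid attached to the partition `p₁^{r₁} ⋯ p_s^{r_s}`. The last
coordinate is the position of the box in its row, counted from the right
(`0` = rightmost box). -/
abbrev PyramidBox {s : ℕ} (p r : Fin s → ℕ) : Type := (i : Fin s) × (Fin (r i) × Fin (p i))

section Phi

variable {R : Type*} [Semiring R]

/-- The paper's `φ_ℓ`, with `f = F` and `g = Fᵗ`. -/
def phi (f g : R) (ℓ : ℕ) (a : R) : R :=
  ∑ i ∈ Finset.range (ℓ + 1), f ^ i * g ^ ℓ * a * g ^ ℓ * f ^ (ℓ - i)

variable {f g q a : R} {ℓ : ℕ}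

theorem phi_eq_zero_of_mul_right (hq : q * g ^ ℓ = 0) (ha : a * q = a) : phi f g ℓ a = 0 := by
  refine Finset.sum_eq_zero fun i _ => ?_
  rw [← ha]
  simp only [mul_assoc]
  rw [← mul_assoc q, hq]
  simp

theorem phi_eq_zero_of_mul_left (hq : g ^ ℓ * q = 0) (ha : q * a = a) : phi f g ℓ a = 0 := by
  refine Finset.sum_eq_zero fun i _ => ?_
  rw [← ha]
  simp only [mul_assoc]
  rw [← mul_assoc (g ^ ℓ), hq]
  simp

theorem phi_mul (hlt : ∀ m < ℓ, g ^ ℓ * f ^ m * q = 0) (hdiag : g ^ ℓ * f ^ ℓ * q = q) :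
    phi f g ℓ a * q = g ^ ℓ * a * q := by
  have hsplit : ∀ i, f ^ i * g ^ ℓ * a * g ^ ℓ * f ^ (ℓ - i) * q =
      f ^ i * g ^ ℓ * a * (g ^ ℓ * f ^ (ℓ - i) * q) := fun i => by simp only [mul_assoc]
  rw [phi, Finset.sum_mul, Finset.sum_range_succ', Finset.sum_eq_zero, zero_add, hsplit,
    Nat.sub_zero, hdiag, pow_zero, one_mul]
  intro i hi
  rw [hsplit, hlt _ (by have := Finset.mem_range.mp hi; omega), mul_zero]

end Phi

section Projection

variable {K V ι : Type*} [Semiring K] [AddCommMonoid V] [Module K V]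

def IsBasisProj (b : Module.Basis ι K V) (Q : Module.End K V) (P : ι → Prop)
    [DecidablePred P] : Prop :=
  ∀ x, Q (b x) = if P x then b x else 0

variable {b : Module.Basis ι K V} {Q : Module.End K V} {P : ι → Prop} [DecidablePred P]

theorem IsBasisProj.mul_eq_mul {X Y : Module.End K V} (hQ : IsBasisProj b Q P)
    (h : ∀ x, P x → X (b x) = Y (b x)) : X * Q = Y * Q :=
  b.ext fun x => by
    simp only [Module.End.mul_apply, hQ x]
    split_ifs with hx
    · exact h x hx
    · simp

theorem IsBasisProj.mul_self (hQ : IsBasisProj b Q P) : Q * Q = Q := by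
  simpa using hQ.mul_eq_mul (X := Q) (Y := 1) fun x hx => by simp [hQ x, hx]

end Projection

namespace PyramidBox

variable {s : ℕ} {p r : Fin s → ℕ}

abbrev atPos (x : PyramidBox p r) (a : ℕ) (ha : a < p x.1) : PyramidBox p r :=
  ⟨x.1, x.2.1, ⟨a, ha⟩⟩

theorem atPos_congr (x : PyramidBox p r) {a c : ℕ} (ha : a < p x.1) (hc : c < p x.1)
    (h : a = c) : x.atPos a ha = x.atPos c hc := by
  subst h; rfl

end PyramidBox

section Pyramid

variable {K V : Type*} [Semiring K] [AddCommMonoid V] [Module K V] {s : ℕ} {p r : Fin s → ℕ}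

def IsRaising (b : Module.Basis (PyramidBox p r) K V) (F : Module.End K V) : Prop :=
  ∀ x, F (b x) = if h : (x.2.2 : ℕ) + 1 < p x.1 then b (x.atPos _ h) else 0

def IsLowering (b : Module.Basis (PyramidBox p r) K V) (Ft : Module.End K V) : Prop :=
  ∀ x, Ft (b x) = if 0 < (x.2.2 : ℕ)
    then b (x.atPos ((x.2.2 : ℕ) - 1) (Nat.lt_of_le_of_lt (Nat.sub_le _ _) x.2.2.isLt)) else 0

variable {b : Module.Basis (PyramidBox p r) K V} {F Ft Q : Module.End K V}

theorem IsRaising.pow_apply (hF : IsRaising b F) (m : ℕ) (x : PyramidBox p r) :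
    (F ^ m) (b x) = if h : (x.2.2 : ℕ) + m < p x.1 then b (x.atPos _ h) else 0 := by
  induction m generalizing x with
  | zero => simp
  | succ m ih =>
    rw [pow_succ', Module.End.mul_apply, ih]
    by_cases h1 : (x.2.2 : ℕ) + m < p x.1
    · rw [dif_pos h1, hF]
      by_cases h2 : (x.2.2 : ℕ) + (m + 1) < p x.1
      · rw [dif_pos h2, dif_pos (by simpa [add_assoc] using h2)]
        exact congrArg b (x.atPos_congr _ _ (by simp [add_assoc]))
      · rw [dif_neg h2, dif_neg (by simpa [add_assoc] using h2)]
    · rw [dif_neg h1, map_zero, dif_neg (by omega)]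

theorem IsLowering.pow_apply (hFt : IsLowering b Ft) (m : ℕ) (x : PyramidBox p r) :
    (Ft ^ m) (b x) = if m ≤ (x.2.2 : ℕ)
      then b (x.atPos ((x.2.2 : ℕ) - m) (Nat.lt_of_le_of_lt (Nat.sub_le _ _) x.2.2.isLt))
      else 0 := by
  induction m generalizing x with
  | zero => simp
  | succ m ih =>
    rw [pow_succ', Module.End.mul_apply, ih]
    by_cases h1 : m ≤ (x.2.2 : ℕ)
    · rw [if_pos h1, hFt]
      by_cases h2 : m + 1 ≤ (x.2.2 : ℕ)
      · rw [if_pos h2, if_pos (show 0 < (x.2.2 : ℕ) - m by omega)]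
        exact congrArg b (x.atPos_congr _ _ (by simp; omega))
      · rw [if_neg h2, if_neg (show ¬ 0 < (x.2.2 : ℕ) - m by omega)]
    · rw [if_neg h1, map_zero, if_neg (by omega)]

variable {P : PyramidBox p r → Prop} [DecidablePred P] {ℓ m : ℕ}

theorem proj_mul_lower_pow_eq_zero (hFt : IsLowering b Ft) (hQ : IsBasisProj b Q P)
    (hP : ∀ x, P x → p x.1 ≤ x.2.2 + ℓ) : Q * Ft ^ ℓ = 0 :=
  b.ext fun x => by
    rw [Module.End.mul_apply, hFt.pow_apply, LinearMap.zero_apply]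
    split_ifs with hx
    · rw [hQ, if_neg fun hP' => ?_]
      have : p x.1 ≤ (x.2.2 : ℕ) - ℓ + ℓ := hP _ hP'
      omega
    · exact map_zero Q

theorem lower_pow_mul_raise_pow_mul_proj_eq_zero (hF : IsRaising b F) (hFt : IsLowering b Ft)
    (hQ : IsBasisProj b Q P) (hP : ∀ x, P x → x.2.2 + m < ℓ) : Ft ^ ℓ * F ^ m * Q = 0 := by
  simpa using hQ.mul_eq_mul (Y := 0) fun x hx => by
    rw [Module.End.mul_apply, hF.pow_apply]
    split_ifs
    · rw [hFt.pow_apply, if_neg (by have := hP x hx; simp; omega), LinearMap.zero_apply]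
    · simp

theorem lower_pow_mul_proj_eq_zero (hFt : IsLowering b Ft) (hQ : IsBasisProj b Q P)
    (hP : ∀ x, P x → x.2.2 < ℓ) : Ft ^ ℓ * Q = 0 := by
  simpa using hQ.mul_eq_mul (Y := 0) fun x hx => by
    rw [hFt.pow_apply, if_neg (by have := hP x hx; omega), LinearMap.zero_apply]

theorem lower_pow_mul_raise_pow_mul_proj (hF : IsRaising b F) (hFt : IsLowering b Ft)
    (hQ : IsBasisProj b Q P) (hP : ∀ x, P x → x.2.2 + ℓ < p x.1) :
    Ft ^ ℓ * F ^ ℓ * Q = Q := by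
  simpa using hQ.mul_eq_mul (Y := 1) fun x hx => by
    rw [Module.End.mul_apply, hF.pow_apply, dif_pos (hP x hx), hFt.pow_apply,
      if_pos (by simp), Module.End.one_apply]
    exact congrArg b (x.atPos_congr _ _ (by simp))

theorem raise_pow_mul_lower_pow_mul_proj (hF : IsRaising b F) (hFt : IsLowering b Ft)
    (hQ : IsBasisProj b Q P) (hP : ∀ x, P x → ℓ ≤ x.2.2) : F ^ ℓ * Ft ^ ℓ * Q = Q := by
  simpa using hQ.mul_eq_mul (Y := 1) fun x hx => by
    have hℓ := hP x hx
    rw [Module.End.mul_apply, hFt.pow_apply, if_pos hℓ, hF.pow_apply,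
      dif_pos (show (x.2.2 : ℕ) - ℓ + ℓ < p x.1 by omega), Module.End.one_apply]
    exact congrArg b (x.atPos_congr _ _ (Nat.sub_add_cancel hℓ))

end Pyramid

theorem stmt4_general {K : Type*} [Field K]
    {V : Type*} [AddCommGroup V] [Module K V]
    {s : ℕ} (p r : Fin s → ℕ)
    (b : Module.Basis (PyramidBox p r) K V)
    (F Ft : Module.End K V) (Qplus Qminus : ℕ → Module.End K V)
    (hF : ∀ x : PyramidBox p r,
      F (b x) = if h : (x.2.2 : ℕ) + 1 < p x.1
        then b ⟨x.1, x.2.1, ⟨(x.2.2 : ℕ) + 1, h⟩⟩ else 0)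
    (hFt : ∀ x : PyramidBox p r,
      Ft (b x) = if 0 < (x.2.2 : ℕ)
        then b ⟨x.1, x.2.1, ⟨(x.2.2 : ℕ) - 1, Nat.lt_of_le_of_lt (Nat.sub_le _ _) x.2.2.isLt⟩⟩
        else 0)
    (hQplus : ∀ (n : ℕ) (x : PyramidBox p r),
      Qplus n (b x) = if ((x.2.2 : ℕ) = 0 ∧ p x.1 = n + 1) then b x else 0)
    (hQminus : ∀ (n : ℕ) (x : PyramidBox p r),
      Qminus n (b x) = if ((x.2.2 : ℕ) + 1 = p x.1 ∧ p x.1 = n + 1) then b x else 0)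
    (h k ℓ : ℕ) :
    (min h k < ℓ → ∀ A : Module.End K V, Qminus k * A * Qplus h = A →
        ∑ i ∈ Finset.range (ℓ + 1), F ^ i * Ft ^ ℓ * A * Ft ^ ℓ * F ^ (ℓ - i) = 0) ∧
    (ℓ ≤ min h k → ∀ A : Module.End K V, Qminus k * A * Qplus h = A →
        (∑ i ∈ Finset.range (ℓ + 1), F ^ i * Ft ^ ℓ * A * Ft ^ ℓ * F ^ (ℓ - i)) = 0 → A = 0) := by
  have hQp : IsBasisProj b (Qplus h) fun x => (x.2.2 : ℕ) = 0 ∧ p x.1 = h + 1 := hQplus h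
  have hQm : IsBasisProj b (Qminus k) fun x => (x.2.2 : ℕ) + 1 = p x.1 ∧ p x.1 = k + 1 :=
    hQminus k
  have hproj : ∀ A, Qminus k * A * Qplus h = A → A * Qplus h = A ∧ Qminus k * A = A :=
    fun A hA => ⟨by rw [← hA, mul_assoc _ (Qplus h), hQp.mul_self],
      by rw [← hA, ← mul_assoc, ← mul_assoc, hQm.mul_self]⟩
  refine ⟨fun hlt A hA => ?_, fun hle A hA hφ => ?_⟩
  all_goals obtain ⟨hAp, hAm⟩ := hproj A hA
  · rcases min_lt_iff.mp hlt with hlt | hlt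
    · exact phi_eq_zero_of_mul_right
        (proj_mul_lower_pow_eq_zero hFt hQp fun x hx => by omega) hAp
    · exact phi_eq_zero_of_mul_left (lower_pow_mul_proj_eq_zero hFt hQm fun x hx => by omega) hAm
  · obtain ⟨hℓh, hℓk⟩ := le_min_iff.mp hle
    calc A = F ^ ℓ * Ft ^ ℓ * Qminus k * A := by
          rw [raise_pow_mul_lower_pow_mul_proj hF hFt hQm fun x hx => by omega, hAm]
      _ = F ^ ℓ * (Ft ^ ℓ * A * Qplus h) := by
          rw [mul_assoc _ (Qminus k), hAm, mul_assoc _ A, hAp, mul_assoc]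
      _ = F ^ ℓ * (phi F Ft ℓ A * Qplus h) := by
          rw [phi_mul
            (fun m hm => lower_pow_mul_raise_pow_mul_proj_eq_zero hF hFt hQp fun x hx => by omega)
            (lower_pow_mul_raise_pow_mul_proj hF hFt hQp fun x hx => by omega)]
      _ = 0 := by rw [show phi F Ft ℓ A = 0 from hφ, zero_mul, mul_zero]

/-- with `Qplus h` the projection onto `V₊ ∩ (Fᵗ)^h V₋` (rightmost boxes of rows
of length `h+1`) and `Qminus k` the projection onto `V₋ ∩ F^k V₊` (leftmost boxes of rows of
length `k+1`), let `g₀^f(h,k) = {A | A = 1_{V₋ ∩ F^k V₊} A 1_{V₊ ∩ (Fᵗ)^h V₋}}`.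
If `ℓ > min h k` then `φ_ℓ` vanishes on `g₀^f(h,k)`, and if `ℓ ≤ min h k` then the
restriction of `φ_ℓ` to `g₀^f(h,k)` is injective. -/
theorem stmt4 {K : Type*} [Field K] [CharZero K]
    {V : Type*} [AddCommGroup V] [Module K V]
    {s : ℕ} (hs : 0 < s) (p r : Fin s → ℕ) (hp : StrictAnti p)
    (b : Module.Basis (PyramidBox p r) K V)
    (F Ft : Module.End K V) (Qplus Qminus : ℕ → Module.End K V)
    (hF : ∀ x : PyramidBox p r,
      F (b x) = if h : (x.2.2 : ℕ) + 1 < p x.1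
        then b ⟨x.1, x.2.1, ⟨(x.2.2 : ℕ) + 1, h⟩⟩ else 0)
    (hFt : ∀ x : PyramidBox p r,
      Ft (b x) = if 0 < (x.2.2 : ℕ)
        then b ⟨x.1, x.2.1, ⟨(x.2.2 : ℕ) - 1, Nat.lt_of_le_of_lt (Nat.sub_le _ _) x.2.2.isLt⟩⟩
        else 0)
    (hQplus : ∀ (n : ℕ) (x : PyramidBox p r),
      Qplus n (b x) = if ((x.2.2 : ℕ) = 0 ∧ p x.1 = n + 1) then b x else 0)
    (hQminus : ∀ (n : ℕ) (x : PyramidBox p r),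
      Qminus n (b x) = if ((x.2.2 : ℕ) + 1 = p x.1 ∧ p x.1 = n + 1) then b x else 0)
    (h k ℓ : ℕ) (hh : h < p ⟨0, hs⟩) (hk : k < p ⟨0, hs⟩) :
    (min h k < ℓ → ∀ A : Module.End K V, Qminus k * A * Qplus h = A →
        ∑ i ∈ Finset.range (ℓ + 1), F ^ i * Ft ^ ℓ * A * Ft ^ ℓ * F ^ (ℓ - i) = 0) ∧
    (ℓ ≤ min h k → ∀ A : Module.End K V, Qminus k * A * Qplus h = A →
        (∑ i ∈ Finset.range (ℓ + 1), F ^ i * Ft ^ ℓ * A * Ft ^ ℓ * F ^ (ℓ - i)) = 0 → A = 0) :=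
  stmt4_general p r b F Ft Qplus Qminus hF hFt hQplus hQminus h k ℓ
end

section
/- Let V_± = ker F^t, ker F for the pyramid nilpotent F, and decompose V_− = ⊕_{k=0}^{p_1−1} (V_− ∩ F^k V_+) and V_+ = ⊕_{k=0}^{p_1−1} (V_+ ∩ (F^t)^k V_−). Then for all 0 ≤ h, k ≤ p_1 − 1 one has the orthogonality relation 1_{V_+ ∩ (F^t)^k V_−} (F^t)^h 1_{V_−} F^h = δ_{h,k} · 1_{V_+ ∩ (F^t)^k V_−} in End(V). -/
/-!
On basis vectors, `F ^ h` moves a box `h` places to the left (or kills it), `1_{V₋}` keeps it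
only if it has become the leftmost box of its row, and `(Fᵗ) ^ h` moves it back. Hence
`(Fᵗ) ^ h 1_{V₋} F ^ h` is the projection onto the boxes lying exactly `h` places from the left
end of their row. The rightmost box of a row of length `k + 1` lies `k` places from its left end,
so composing with `1_{V₊ ∩ (Fᵗ)^k V₋}` gives `δ_{h,k} 1_{V₊ ∩ (Fᵗ)^k V₋}`.
-/

namespace PyramidBox

variable {R V : Type*} [Semiring R] [AddCommMonoid V] [Module R V]
  {s : ℕ} {p r : Fin s → ℕ} (b : PyramidBox p r → V)

def IsLeftShift (F : Module.End R V) : Prop :=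
  ∀ x : PyramidBox p r, F (b x) = if h : (x.2.2 : ℕ) + 1 < p x.1
    then b ⟨x.1, x.2.1, ⟨(x.2.2 : ℕ) + 1, h⟩⟩ else 0

def IsRightShift (Ft : Module.End R V) : Prop :=
  ∀ x : PyramidBox p r, Ft (b x) = if 0 < (x.2.2 : ℕ)
    then b ⟨x.1, x.2.1, ⟨(x.2.2 : ℕ) - 1, Nat.lt_of_le_of_lt (Nat.sub_le _ _) x.2.2.isLt⟩⟩
    else 0

def IsLeftmostProj (P : Module.End R V) : Prop :=
  ∀ x : PyramidBox p r, P (b x) = if (x.2.2 : ℕ) + 1 = p x.1 then b x else 0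

variable {b}

theorem IsLeftShift.pow_apply {F : Module.End R V} (hF : IsLeftShift b F)
    (n : ℕ) (x : PyramidBox p r) :
    (F ^ n) (b x) = if hn : (x.2.2 : ℕ) + n < p x.1
      then b ⟨x.1, x.2.1, ⟨(x.2.2 : ℕ) + n, hn⟩⟩ else 0 := by
  induction n with
  | zero => simp
  | succ n ih =>
    rw [pow_succ', Module.End.mul_apply, ih]
    by_cases hn : (x.2.2 : ℕ) + n < p x.1
    · simp only [dif_pos hn, hF _, ← add_assoc]
    · rw [dif_neg hn, map_zero, dif_neg (by omega)]

theorem IsRightShift.pow_apply {Ft : Module.End R V} (hFt : IsRightShift b Ft)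
    (n : ℕ) (x : PyramidBox p r) :
    (Ft ^ n) (b x) = if n ≤ (x.2.2 : ℕ)
      then b ⟨x.1, x.2.1, ⟨(x.2.2 : ℕ) - n, Nat.lt_of_le_of_lt (Nat.sub_le _ _) x.2.2.isLt⟩⟩
      else 0 := by
  induction n with
  | zero => simp
  | succ n ih =>
    rw [pow_succ', Module.End.mul_apply, ih]
    by_cases hn : n ≤ (x.2.2 : ℕ)
    · simp only [if_pos hn, hFt _, Nat.sub_sub]
      exact if_congr (by omega) rfl rfl
    · rw [if_neg hn, map_zero, if_neg (by omega)]

theorem rightShift_pow_leftmostProj_leftShift_pow_apply {F Ft P : Module.End R V}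
    (hF : IsLeftShift b F) (hFt : IsRightShift b Ft) (hP : IsLeftmostProj b P)
    (n : ℕ) (x : PyramidBox p r) :
    (Ft ^ n) (P ((F ^ n) (b x))) = if (x.2.2 : ℕ) + n + 1 = p x.1 then b x else 0 := by
  rw [hF.pow_apply]
  by_cases hlt : (x.2.2 : ℕ) + n < p x.1
  · rw [dif_pos hlt, hP]
    dsimp only
    by_cases hlast : (x.2.2 : ℕ) + n + 1 = p x.1
    · rw [if_pos hlast, if_pos hlast, hFt.pow_apply]
      dsimp only
      rw [if_pos (by omega)]
      simp
    · rw [if_neg hlast, if_neg hlast, map_zero]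
  · rw [dif_neg hlt, map_zero, map_zero, if_neg (by omega)]

end PyramidBox

open PyramidBox in
theorem stmt19_general {K : Type*} [Field K]
    {V : Type*} [AddCommGroup V] [Module K V]
    {s : ℕ} (p r : Fin s → ℕ)
    (b : Module.Basis (PyramidBox p r) K V)
    (F Ft Pminus : Module.End K V) (Qplus : ℕ → Module.End K V)
    (hF : ∀ x : PyramidBox p r,
      F (b x) = if h : (x.2.2 : ℕ) + 1 < p x.1
        then b ⟨x.1, x.2.1, ⟨(x.2.2 : ℕ) + 1, h⟩⟩ else 0)
    (hFt : ∀ x : PyramidBox p r,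
      Ft (b x) = if 0 < (x.2.2 : ℕ)
        then b ⟨x.1, x.2.1, ⟨(x.2.2 : ℕ) - 1, Nat.lt_of_le_of_lt (Nat.sub_le _ _) x.2.2.isLt⟩⟩
        else 0)
    (hPminus : ∀ x : PyramidBox p r,
      Pminus (b x) = if (x.2.2 : ℕ) + 1 = p x.1 then b x else 0)
    (hQplus : ∀ (n : ℕ) (x : PyramidBox p r),
      Qplus n (b x) = if ((x.2.2 : ℕ) = 0 ∧ p x.1 = n + 1) then b x else 0)
    (h k : ℕ) :
    Qplus k * Ft ^ h * Pminus * F ^ h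
      = if h = k then Qplus k else (0 : Module.End K V) := by
  refine b.ext fun x => ?_
  simp only [Module.End.mul_apply,
    rightShift_pow_leftmostProj_leftShift_pow_apply (b := b) hF hFt hPminus]
  split_ifs with hlast hhk hhk
  · rfl
  · rw [hQplus, if_neg (by omega), LinearMap.zero_apply]
  · rw [map_zero, hQplus, if_neg (by omega)]
  · rw [map_zero, LinearMap.zero_apply]

/-- orthogonality relation for the pyramid.  With `F` the left shift, `Ft = Fᵗ`
the right shift, `Pminus = 1_{V₋}` the projection onto `V₋ = ker F` (leftmost boxes) and
`Qplus n = 1_{V₊ ∩ (Fᵗ)ⁿ V₋}` the projection onto rightmost boxes of rows of length `n+1`,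
for all `0 ≤ h, k ≤ p₁ − 1` one has
`1_{V₊ ∩ (Fᵗ)^k V₋} (Fᵗ)^h 1_{V₋} F^h = δ_{h,k} · 1_{V₊ ∩ (Fᵗ)^k V₋}` in `End(V)`. -/
theorem stmt19 {K : Type*} [Field K] [CharZero K]
    {V : Type*} [AddCommGroup V] [Module K V]
    {s : ℕ} (hs : 0 < s) (p r : Fin s → ℕ) (hp : StrictAnti p)
    (b : Module.Basis (PyramidBox p r) K V)
    (F Ft Pminus : Module.End K V) (Qplus : ℕ → Module.End K V)
    (hF : ∀ x : PyramidBox p r,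
      F (b x) = if h : (x.2.2 : ℕ) + 1 < p x.1
        then b ⟨x.1, x.2.1, ⟨(x.2.2 : ℕ) + 1, h⟩⟩ else 0)
    (hFt : ∀ x : PyramidBox p r,
      Ft (b x) = if 0 < (x.2.2 : ℕ)
        then b ⟨x.1, x.2.1, ⟨(x.2.2 : ℕ) - 1, Nat.lt_of_le_of_lt (Nat.sub_le _ _) x.2.2.isLt⟩⟩
        else 0)
    (hPminus : ∀ x : PyramidBox p r,
      Pminus (b x) = if (x.2.2 : ℕ) + 1 = p x.1 then b x else 0)
    (hQplus : ∀ (n : ℕ) (x : PyramidBox p r),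
      Qplus n (b x) = if ((x.2.2 : ℕ) = 0 ∧ p x.1 = n + 1) then b x else 0)
    (h k : ℕ) (hh : h < p ⟨0, hs⟩) (hk : k < p ⟨0, hs⟩) :
    Qplus k * Ft ^ h * Pminus * F ^ h
      = if h = k then Qplus k else (0 : Module.End K V) :=
  stmt19_general p r b F Ft Pminus Qplus hF hFt hPminus hQplus h k
end
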